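/- Let U ⊆ ℝⁿ be open and convex, and let φ₀, φ₁ : U → ℝ be twice continuously differentiable with positive definite Hessian matrices at every point. Let W ⊆ ℝⁿ × (0,1) be open, and let ξ, η : W → U be maps, differentiable in the t-variable, satisfying for all (x,t) ∈ W: (1−t)·ξ(x,t) + t·η(x,t) = x and ∇φ₀(ξ(x,t)) = ∇φ₁(η(x,t)). Then for each fixed x the map t ↦ ∇φ₀(ξ(x,t)) is differentiable in t, with derivative ∂ₜ[∇φ₀(ξ(x,t))] = ((1−t)·(D²φ₀(ξ(x,t)))⁻¹ + t·(D²φ₁(η(x,t)))⁻¹)⁻¹ · (ξ(x,t) − η(x,t)). In particular, if u : W → ℝ has spatial gradient ∇ₓu(x,t) = ∇φ₀(ξ(x,t)) on W, then the mixed second derivative satisfies D²ₓₜu(x,t) = ((1−t)·(D²φ₀(ξ(x,t)))⁻¹ + t·(D²φ₁(η(x,t)))⁻¹)⁻¹ (ξ(x,t) − η(x,t)). -/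

import Mathlib

/-- The gradient of `φ : ℝⁿ → ℝ` at `x`, as the vector of partial derivatives. -/
noncomputable def grad {n : ℕ} (φ : (Fin n → ℝ) → ℝ) (x : Fin n → ℝ) : Fin n → ℝ :=
  fun i => fderiv ℝ φ x (Pi.single i 1)

/-- The Jacobian matrix of a map `g : ℝⁿ → ℝⁿ` at `x`. -/
noncomputable def jacobianMatrix {n : ℕ} (g : (Fin n → ℝ) → Fin n → ℝ)
    (x : Fin n → ℝ) : Matrix (Fin n) (Fin n) ℝ :=
  Matrix.of fun i j => fderiv ℝ g x (Pi.single j 1) i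

/-- The Hessian matrix of `φ : ℝⁿ → ℝ` at `x`. -/
noncomputable def hess {n : ℕ} (φ : (Fin n → ℝ) → ℝ) (x : Fin n → ℝ) :
    Matrix (Fin n) (Fin n) ℝ :=
  jacobianMatrix (grad φ) x

/-! Differentiating the two constraints in `t` gives `(1 - t) ξ' + t η' = ξ - η` and
`D²φ₀(ξ) ξ' = D²φ₁(η) η'`. Calling `g'` this common value, which is the `t`-derivative of
`∇φ₀(ξ)`, we get `ξ' = D²φ₀(ξ)⁻¹ g'` and `η' = D²φ₁(η)⁻¹ g'`, hence
`((1 - t) D²φ₀(ξ)⁻¹ + t D²φ₁(η)⁻¹) g' = ξ - η`; the bracket is positive definite, so it can be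
inverted. -/

open Filter Topology Matrix

theorem jacobianMatrix_mulVec {n : ℕ} (g : (Fin n → ℝ) → Fin n → ℝ) (x v : Fin n → ℝ) :
    jacobianMatrix g x *ᵥ v = fderiv ℝ g x v :=
  LinearMap.toMatrix'_mulVec (fderiv ℝ g x : (Fin n → ℝ) →ₗ[ℝ] Fin n → ℝ) v

theorem HasDerivAt.comp_jacobianMatrix {n : ℕ} {g : (Fin n → ℝ) → Fin n → ℝ}
    {γ : ℝ → Fin n → ℝ} {γ' : Fin n → ℝ} {t : ℝ} (hg : DifferentiableAt ℝ g (γ t))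
    (hγ : HasDerivAt γ γ' t) :
    HasDerivAt (fun s => g (γ s)) (jacobianMatrix g (γ t) *ᵥ γ') t := by
  rw [jacobianMatrix_mulVec]
  exact hg.hasFDerivAt.comp_hasDerivAt t hγ

theorem ContDiffAt.differentiableAt_grad {n : ℕ} {φ : (Fin n → ℝ) → ℝ} {y : Fin n → ℝ}
    (hφ : ContDiffAt ℝ 2 φ y) : DifferentiableAt ℝ (grad φ) y := by
  have h : DifferentiableAt ℝ (fderiv ℝ φ) y :=
    (hφ.fderiv_right (m := 1) (by norm_num)).differentiableAt (by norm_num)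
  exact differentiableAt_pi.2 fun i => h.clm_apply (differentiableAt_const _)

theorem HasDerivAt.one_sub_smul_add_smul_eq_sub {E : Type*} [NormedAddCommGroup E]
    [NormedSpace ℝ E] {γ₀ γ₁ : ℝ → E} {γ₀' γ₁' x : E} {t : ℝ} (h₀ : HasDerivAt γ₀ γ₀' t)
    (h₁ : HasDerivAt γ₁ γ₁' t) (hseg : ∀ᶠ s in 𝓝 t, (1 - s) • γ₀ s + s • γ₁ s = x) :
    (1 - t) • γ₀' + t • γ₁' = γ₀ t - γ₁ t := by
  have hd := (((hasDerivAt_id' t).const_sub 1).smul h₀).add ((hasDerivAt_id' t).smul h₁)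
  have h0 := (hd.congr_of_eventuallyEq (hseg.mono fun s hs => hs.symm)).unique
    (hasDerivAt_const t x)
  linear_combination (norm := module) h0

theorem Matrix.mulVec_eq_inv_smul_inv_add_smul_inv_mulVec {K ι : Type*} [Field K] [Fintype ι]
    [DecidableEq ι] {A B : Matrix ι ι K} (hA : IsUnit A) (hB : IsUnit B) {a b : K}
    (hM : IsUnit (a • A⁻¹ + b • B⁻¹)) {v w : ι → K} (h : A *ᵥ v = B *ᵥ w) :
    A *ᵥ v = (a • A⁻¹ + b • B⁻¹)⁻¹ *ᵥ (a • v + b • w) := by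
  have hv : A⁻¹ *ᵥ (A *ᵥ v) = v := by
    rw [mulVec_mulVec, nonsing_inv_mul _ ((isUnit_iff_isUnit_det A).1 hA), one_mulVec]
  have hw : B⁻¹ *ᵥ (A *ᵥ v) = w := by
    rw [h, mulVec_mulVec, nonsing_inv_mul _ ((isUnit_iff_isUnit_det B).1 hB), one_mulVec]
  have hMv : (a • A⁻¹ + b • B⁻¹) *ᵥ (A *ᵥ v) = a • v + b • w := by
    rw [add_mulVec, smul_mulVec, smul_mulVec, hv, hw]
  rw [← hMv, mulVec_mulVec, nonsing_inv_mul _ ((isUnit_iff_isUnit_det _).1 hM), one_mulVec]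

theorem hasDerivAt_grad_comp_of_segment {n : ℕ} {φ₀ φ₁ : (Fin n → ℝ) → ℝ}
    {γ₀ γ₁ : ℝ → Fin n → ℝ} {x : Fin n → ℝ} {t : ℝ} (ht : t ∈ Set.Ioo (0 : ℝ) 1)
    (hφ₀ : DifferentiableAt ℝ (grad φ₀) (γ₀ t)) (hφ₁ : DifferentiableAt ℝ (grad φ₁) (γ₁ t))
    (hH₀ : (hess φ₀ (γ₀ t)).PosDef) (hH₁ : (hess φ₁ (γ₁ t)).PosDef)
    (hγ₀ : DifferentiableAt ℝ γ₀ t) (hγ₁ : DifferentiableAt ℝ γ₁ t)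
    (hseg : ∀ᶠ s in 𝓝 t, (1 - s) • γ₀ s + s • γ₁ s = x)
    (hgrad : ∀ᶠ s in 𝓝 t, grad φ₀ (γ₀ s) = grad φ₁ (γ₁ s)) :
    HasDerivAt (fun s => grad φ₀ (γ₀ s))
      (((1 - t) • (hess φ₀ (γ₀ t))⁻¹ + t • (hess φ₁ (γ₁ t))⁻¹)⁻¹ *ᵥ (γ₀ t - γ₁ t)) t := by
  have hd₀ : HasDerivAt (fun s => grad φ₀ (γ₀ s)) (hess φ₀ (γ₀ t) *ᵥ deriv γ₀ t) t :=
    hγ₀.hasDerivAt.comp_jacobianMatrix hφ₀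
  have hd₁ : HasDerivAt (fun s => grad φ₀ (γ₀ s)) (hess φ₁ (γ₁ t) *ᵥ deriv γ₁ t) t :=
    (hγ₁.hasDerivAt.comp_jacobianMatrix hφ₁).congr_of_eventuallyEq hgrad
  have hM : ((1 - t) • (hess φ₀ (γ₀ t))⁻¹ + t • (hess φ₁ (γ₁ t))⁻¹).PosDef :=
    (hH₀.inv.smul (sub_pos.2 ht.2)).add (hH₁.inv.smul ht.1)
  rw [← hγ₀.hasDerivAt.one_sub_smul_add_smul_eq_sub hγ₁.hasDerivAt hseg, ← mulVec_eq_inv_smul_inv_add_smul_inv_mulVec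
    hH₀.isUnit hH₁.isUnit hM.isUnit (hd₀.unique hd₁)]
  exact hd₀

theorem stmt6_general (n : ℕ) (U : Set (Fin n → ℝ)) (hUo : IsOpen U)
    (φ₀ φ₁ : (Fin n → ℝ) → ℝ)
    (hφ₀ : ContDiffOn ℝ 2 φ₀ U) (hφ₁ : ContDiffOn ℝ 2 φ₁ U)
    (hH₀ : ∀ x ∈ U, (hess φ₀ x).PosDef) (hH₁ : ∀ x ∈ U, (hess φ₁ x).PosDef)
    (W : Set ((Fin n → ℝ) × ℝ)) (hWo : IsOpen W)
    (hWt : ∀ p ∈ W, p.2 ∈ Set.Ioo (0 : ℝ) 1)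
    (ξ η : (Fin n → ℝ) × ℝ → Fin n → ℝ)
    (hξU : ∀ p ∈ W, ξ p ∈ U) (hηU : ∀ p ∈ W, η p ∈ U)
    (hξd : ∀ p ∈ W, DifferentiableAt ℝ (fun s => ξ (p.1, s)) p.2)
    (hηd : ∀ p ∈ W, DifferentiableAt ℝ (fun s => η (p.1, s)) p.2)
    (hseg : ∀ p ∈ W, (1 - p.2) • ξ p + p.2 • η p = p.1)
    (hgrad : ∀ p ∈ W, grad φ₀ (ξ p) = grad φ₁ (η p)) :
    ∀ p ∈ W,
      DifferentiableAt ℝ (fun s => grad φ₀ (ξ (p.1, s))) p.2 ∧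
      deriv (fun s => grad φ₀ (ξ (p.1, s))) p.2 =
        (((1 - p.2) • (hess φ₀ (ξ p))⁻¹ + p.2 • (hess φ₁ (η p))⁻¹)⁻¹).mulVec
          (ξ p - η p) ∧
      ∀ u : (Fin n → ℝ) × ℝ → ℝ,
        (∀ q ∈ W, grad (fun y => u (y, q.2)) q.1 = grad φ₀ (ξ q)) →
        deriv (fun s => grad (fun y => u (y, s)) p.1) p.2 =
          (((1 - p.2) • (hess φ₀ (ξ p))⁻¹ + p.2 • (hess φ₁ (η p))⁻¹)⁻¹).mulVec
            (ξ p - η p) := by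
  intro p hp
  have hslice : ∀ᶠ s in 𝓝 p.2, (p.1, s) ∈ W :=
    (hWo.preimage (Continuous.prodMk_right p.1)).mem_nhds hp
  have hξ := (hφ₀.contDiffAt (hUo.mem_nhds (hξU p hp))).differentiableAt_grad
  have hη := (hφ₁.contDiffAt (hUo.mem_nhds (hηU p hp))).differentiableAt_grad
  have key := hasDerivAt_grad_comp_of_segment (hWt p hp) hξ hη (hH₀ _ (hξU p hp))
    (hH₁ _ (hηU p hp)) (hξd p hp) (hηd p hp) (hslice.mono fun s hs => hseg _ hs)
    (hslice.mono fun s hs => hgrad _ hs)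
  refine ⟨key.differentiableAt, key.deriv, fun u hu => ?_⟩
  have hu_eq : (fun s => grad (fun y => u (y, s)) p.1) =ᶠ[𝓝 p.2]
      fun s => grad φ₀ (ξ (p.1, s)) :=
    hslice.mono fun s hs => hu _ hs
  rw [hu_eq.deriv_eq, key.deriv]

/-- Lemma 3.4 of the paper: under the constraints `(1-t)ξ + tη = x` and
`∇φ₀(ξ) = ∇φ₁(η)`, the map `t ↦ ∇φ₀(ξ(x,t))` is differentiable with derivative
`((1-t)(D²φ₀(ξ))⁻¹ + t(D²φ₁(η))⁻¹)⁻¹ (ξ - η)`; in particular the mixed derivative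
`D²ₓₜu` of a function `u` with `∇ₓu(x,t) = ∇φ₀(ξ(x,t))` is given by this vector. -/
theorem stmt6 (n : ℕ) (U : Set (Fin n → ℝ)) (hUo : IsOpen U) (hUc : Convex ℝ U)
    (φ₀ φ₁ : (Fin n → ℝ) → ℝ)
    (hφ₀ : ContDiffOn ℝ 2 φ₀ U) (hφ₁ : ContDiffOn ℝ 2 φ₁ U)
    (hH₀ : ∀ x ∈ U, (hess φ₀ x).PosDef) (hH₁ : ∀ x ∈ U, (hess φ₁ x).PosDef)
    (W : Set ((Fin n → ℝ) × ℝ)) (hWo : IsOpen W)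
    (hWt : ∀ p ∈ W, p.2 ∈ Set.Ioo (0 : ℝ) 1)
    (ξ η : (Fin n → ℝ) × ℝ → Fin n → ℝ)
    (hξU : ∀ p ∈ W, ξ p ∈ U) (hηU : ∀ p ∈ W, η p ∈ U)
    (hξd : ∀ p ∈ W, DifferentiableAt ℝ (fun s => ξ (p.1, s)) p.2)
    (hηd : ∀ p ∈ W, DifferentiableAt ℝ (fun s => η (p.1, s)) p.2)
    (hseg : ∀ p ∈ W, (1 - p.2) • ξ p + p.2 • η p = p.1)
    (hgrad : ∀ p ∈ W, grad φ₀ (ξ p) = grad φ₁ (η p)) :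
    ∀ p ∈ W,
      DifferentiableAt ℝ (fun s => grad φ₀ (ξ (p.1, s))) p.2 ∧
      deriv (fun s => grad φ₀ (ξ (p.1, s))) p.2 =
        (((1 - p.2) • (hess φ₀ (ξ p))⁻¹ + p.2 • (hess φ₁ (η p))⁻¹)⁻¹).mulVec
          (ξ p - η p) ∧
      ∀ u : (Fin n → ℝ) × ℝ → ℝ,
        (∀ q ∈ W, grad (fun y => u (y, q.2)) q.1 = grad φ₀ (ξ q)) →
        deriv (fun s => grad (fun y => u (y, s)) p.1) p.2 =
          (((1 - p.2) • (hess φ₀ (ξ p))⁻¹ + p.2 • (hess φ₁ (η p))⁻¹)⁻¹).mulVec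
            (ξ p - η p) :=
  stmt6_general n U hUo φ₀ φ₁ hφ₀ hφ₁ hH₀ hH₁ W hWo hWt ξ η hξU hηU hξd hηd hseg hgrad
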